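/- For a vector θ = (θ_1, …, θ_p) of positive reals set G(θ; s) = Σ_{k=1}^p θ_k^s and Λ(θ) = Σ_{k=1}^p θ_k log θ_k. For every real s > 0, the set of limit points of the sequence (G(η(N); s))_{N≥1} is the closed interval with endpoints 1 and 1/(2^s − 1) (namely [1, 1/(2^s − 1)] for 0 < s < 1 and [1/(2^s − 1), 1] for s > 1). The set of limit points of the sequence (Λ(η(N)))_{N≥1} is the closed interval [−2 log 2, 0]. -/

import Mathlib

open Filter Topology

noncomputable section

namespace GreedyEnergy

/-- Decreasing list `n₁ > n₂ > ⋯ > n_p` of the binary exponents of `N`,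
so that `N = 2^{n₁} + ⋯ + 2^{n_p}` with `n₁ > n₂ > ⋯ > n_p ≥ 0`. -/
def binExps (N : ℕ) : List ℕ :=
  ((List.range (N + 1)).filter fun i => N.testBit i).reverse

/-- The number `p = τ_b(N)` of ones in the binary expansion of `N`. -/
def pbin (N : ℕ) : ℕ := (binExps N).length

/-- `η(N)` viewed as an infinite sequence (0-indexed): the entry of index `k`
is `θ_{k+1} = 2^{n_{k+1}}/N` for `k < p`, and `0` for `k ≥ p`. -/
def eta (N : ℕ) : ℕ → ℝ :=
  fun k => ((binExps N).map fun n => (2 : ℝ) ^ n / (N : ℝ)).getD k 0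

/-- `H(θ; s)` for a finite vector of length `p` given (0-indexed) by `θ : ℕ → ℝ`:
`H(θ;s) = Σ_{k=1}^p θ_k^{s+1} + 2(2^s − 1) Σ_{k=1}^{p−1} θ_k^s Σ_{j=k+1}^p θ_j`. -/
def Hvec (θ : ℕ → ℝ) (p : ℕ) (s : ℝ) : ℝ :=
  (∑ k ∈ Finset.range p, θ k ^ (s + 1)) +
    2 * ((2 : ℝ) ^ s - 1) *
      ∑ k ∈ Finset.range p, θ k ^ s * ∑ j ∈ Finset.Ico (k + 1) p, θ j

/-- `K(θ) = 2 log 2 + Σ_{k=1}^p θ_k² log(θ_k/4) + 2 Σ_{k=1}^{p−1} (Σ_{j=k+1}^p θ_j) θ_k log θ_k`. -/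
def Kvec (θ : ℕ → ℝ) (p : ℕ) : ℝ :=
  2 * Real.log 2 + (∑ k ∈ Finset.range p, θ k ^ 2 * Real.log (θ k / 4)) +
    2 * ∑ k ∈ Finset.range p, (∑ j ∈ Finset.Ico (k + 1) p, θ j) * (θ k * Real.log (θ k))

/-- `R(θ) = −(2 log 2) Σ_{k=1}^p (k−1) θ_k − Σ_{k=1}^p θ_k log θ_k` (0-indexed: `k−1 ↦ k`). -/
def Rvec (θ : ℕ → ℝ) (p : ℕ) : ℝ :=
  -(2 * Real.log 2) * (∑ k ∈ Finset.range p, (k : ℝ) * θ k) -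
    ∑ k ∈ Finset.range p, θ k * Real.log (θ k)

/-- `G(θ; s) = Σ_{k=1}^p θ_k^s`. -/
def Gvec (θ : ℕ → ℝ) (p : ℕ) (s : ℝ) : ℝ := ∑ k ∈ Finset.range p, θ k ^ s

/-- `Λ(θ) = Σ_{k=1}^p θ_k log θ_k`. -/
def Λvec (θ : ℕ → ℝ) (p : ℕ) : ℝ := ∑ k ∈ Finset.range p, θ k * Real.log (θ k)

/-- `H(η(N); s)`. -/
def Heta (N : ℕ) (s : ℝ) : ℝ := Hvec (eta N) (pbin N) s

/-- `K(η(N))`. -/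
def Keta (N : ℕ) : ℝ := Kvec (eta N) (pbin N)

/-- `R(η(N))`. -/
def Reta (N : ℕ) : ℝ := Rvec (eta N) (pbin N)

/-- `G(η(N); s)`. -/
def Geta (N : ℕ) (s : ℝ) : ℝ := Gvec (eta N) (pbin N) s

/-- `Λ(η(N))`. -/
def Λeta (N : ℕ) : ℝ := Λvec (eta N) (pbin N)

/-- The set `𝒮` of infinite sequences `ϑ` for which there is a strictly increasing
sequence of positive integers `N_m` with `ϑ_j = lim_m (η(N_m))_j` for every `j`. -/
def Sset : Set (ℕ → ℝ) :=
  {ϑ | ∃ Nm : ℕ → ℕ, StrictMono Nm ∧ (∀ m, 1 ≤ Nm m) ∧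
        ∀ j, Tendsto (fun m => eta (Nm m) j) atTop (𝓝 (ϑ j))}

/-- `H(ϑ; s)` for an infinite sequence `ϑ` (0-indexed). The conventions
`ϑ_n log ϑ_n = 0` and `ϑ_n^s ϑ_j = 0` when `ϑ_n = 0` hold automatically,
since `Real.log 0 = 0` and `(0:ℝ) ^ s = 0` for `s ≠ 0` (and the factor
`2^s − 1` vanishes when `s = 0`). -/
def Hinf (ϑ : ℕ → ℝ) (s : ℝ) : ℝ :=
  (∑' n : ℕ, ϑ n ^ (s + 1)) +
    2 * ((2 : ℝ) ^ s - 1) * ∑' n : ℕ, ϑ n ^ s * ∑' j : ℕ, ϑ (n + 1 + j)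

/-- `K(ϑ)` for an infinite sequence `ϑ`. -/
def Kinf (ϑ : ℕ → ℝ) : ℝ :=
  2 * Real.log 2 + (∑' n : ℕ, ϑ n ^ 2 * Real.log (ϑ n / 4)) +
    2 * ∑' n : ℕ, (∑' j : ℕ, ϑ (n + 1 + j)) * (ϑ n * Real.log (ϑ n))

/-- `R(ϑ)` for an infinite sequence `ϑ` (0-indexed: `n−1 ↦ n`). -/
def Rinf (ϑ : ℕ → ℝ) : ℝ :=
  -(2 * Real.log 2) * (∑' n : ℕ, (n : ℝ) * ϑ n) - ∑' n : ℕ, ϑ n * Real.log (ϑ n)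

/-- The set of limit points of a real sequence: values of convergent subsequences. -/
def limitPoints (x : ℕ → ℝ) : Set ℝ :=
  {L | ∃ φ : ℕ → ℕ, StrictMono φ ∧ Tendsto (fun m => x (φ m)) atTop (𝓝 L)}

/-- The Riesz `s`-kernel: `k_s(z,w) = |z−w|^{−s}` for `s ≠ 0`, `k_0(z,w) = −log|z−w|`. -/
def kernel (s : ℝ) (z w : ℂ) : ℝ :=
  if s = 0 then -Real.log ‖z - w‖ else ‖z - w‖ ^ (-s)

/-- The Riesz `s`-energy `E_s(a_0, …, a_{N−1}) = Σ_{i ≠ j} k_s(a_i, a_j)`. -/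
def energy (s : ℝ) (a : ℕ → ℂ) (N : ℕ) : ℝ :=
  ∑ i ∈ Finset.range N, ∑ j ∈ Finset.range N,
    if i ≠ j then kernel s (a i) (a j) else 0

/-- The potential `U_{N,s}(z) = Σ_{ℓ=0}^{N−1} k_s(z, a_ℓ)`. -/
def pot (s : ℝ) (a : ℕ → ℂ) (N : ℕ) (z : ℂ) : ℝ :=
  ∑ l ∈ Finset.range N, kernel s z (a l)

/-- A greedy `s`-energy sequence on the unit circle: all points lie on `S¹`, and for
every `N ≥ 1` the point `a_N` minimizes (if `s ≥ 0`) resp. maximizes (if `s < 0`)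
the potential `U_{N,s}` over `S¹`. -/
def IsGreedy (s : ℝ) (a : ℕ → ℂ) : Prop :=
  (∀ n, ‖a n‖ = 1) ∧
    ∀ N, 1 ≤ N →
      ((0 ≤ s → ∀ z : ℂ, ‖z‖ = 1 → pot s a N (a N) ≤ pot s a N z) ∧
        (s < 0 → ∀ z : ℂ, ‖z‖ = 1 → pot s a N z ≤ pot s a N (a N)))

/-- `I_s(σ) = 2^{−s} Γ((1−s)/2) / (√π Γ(1 − s/2))`. -/
def Isigma (s : ℝ) : ℝ :=
  (2 : ℝ) ^ (-s) / Real.sqrt Real.pi * (Real.Gamma ((1 - s) / 2) / Real.Gamma (1 - s / 2))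

/-- The value `ζ(s)` of the Riemann zeta function at a real `s` (real part of the
analytically continued zeta function). -/
def zetaR (s : ℝ) : ℝ := (riemannZeta (s : ℂ)).re


/-! ### Auxiliary machinery -/

section Aux

/-- Sum of `f` over the set binary digits of `N`. -/
def bA (f : ℕ → ℝ) (N : ℕ) : ℝ := ∑ i ∈ Finset.range (N+1), if N.testBit i then f i else 0

lemma bA_zero (f : ℕ → ℝ) : bA f 0 = 0 := by simp [bA]

lemma bA_one (f : ℕ → ℝ) : bA f 1 = f 0 := by
  simp [bA, Finset.sum_range_succ, Nat.testBit]

lemma bA_shrink (f : ℕ → ℝ) (N M : ℕ) (h : N + 1 ≤ M) :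
    ∑ i ∈ Finset.range M, (if N.testBit i then f i else 0) = bA f N := by
  unfold bA
  refine (Finset.sum_subset (Finset.range_subset_range.2 h) ?_).symm
  intro i _ hi
  simp only [Finset.mem_range, not_lt] at hi
  have : N < 2 ^ i := lt_of_lt_of_le (Nat.lt_two_pow_self (n := N))
    (Nat.pow_le_pow_right (by norm_num) (by omega))
  simp [Nat.testBit_eq_false_of_lt this]

lemma bA_two_mul (f : ℕ → ℝ) (N : ℕ) : bA f (2*N) = bA (fun i => f (i+1)) N := by
  rcases Nat.eq_zero_or_pos N with rfl | hN
  · simp [bA]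
  have h1 : bA f (2*N) = ∑ i ∈ Finset.range (2*N+1), if (2*N).testBit i then f i else 0 := rfl
  rw [h1, Finset.sum_range_succ']
  have ht0 : (2*N).testBit 0 = false := by simp [Nat.testBit_zero, Nat.mul_mod_right]
  rw [ht0]
  simp only [Bool.false_eq_true, if_false, add_zero]
  have : ∀ i, (2*N).testBit (i+1) = N.testBit i := by
    intro i; rw [Nat.testBit_add_one]; congr 1; omega
  simp only [this]
  exact bA_shrink _ _ _ (by omega)

lemma bA_two_mul_add_one (f : ℕ → ℝ) (N : ℕ) :
    bA f (2*N+1) = bA (fun i => f (i+1)) N + f 0 := by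
  have h1 : bA f (2*N+1) = ∑ i ∈ Finset.range (2*N+2), if (2*N+1).testBit i then f i else 0 := rfl
  rw [h1, Finset.sum_range_succ']
  have ht0 : (2*N+1).testBit 0 = true := by
    simp only [Nat.testBit_zero, decide_eq_true_eq]
    omega
  rw [ht0]
  simp only [if_true]
  have : ∀ i, (2*N+1).testBit (i+1) = N.testBit i := by
    intro i; rw [Nat.testBit_add_one]; congr 1; omega
  simp only [this]
  rw [bA_shrink _ _ _ (by omega)]

lemma bA_congr {f g : ℕ → ℝ} (h : ∀ i, f i = g i) (N : ℕ) : bA f N = bA g N := by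
  unfold bA; exact Finset.sum_congr rfl fun i _ => by rw [h i]

lemma bA_add (f g : ℕ → ℝ) (N : ℕ) : bA (fun i => f i + g i) N = bA f N + bA g N := by
  unfold bA; rw [← Finset.sum_add_distrib]
  exact Finset.sum_congr rfl fun i _ => by split <;> simp

lemma bA_const_mul (c : ℝ) (f : ℕ → ℝ) (N : ℕ) : bA (fun i => c * f i) N = c * bA f N := by
  unfold bA; rw [Finset.mul_sum]
  exact Finset.sum_congr rfl fun i _ => by split <;> simp

lemma bA_div (f : ℕ → ℝ) (c : ℝ) (N : ℕ) : bA (fun i => f i / c) N = bA f N / c := by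
  unfold bA; rw [Finset.sum_div]
  exact Finset.sum_congr rfl fun i _ => by split <;> simp

lemma bA_pow2 : ∀ N : ℕ, bA (fun i => (2:ℝ)^i) N = N := by
  intro N
  induction N using Nat.strong_induction_on with
  | _ N ih =>
    match N, ih with
    | 0, _ => simp [bA_zero]
    | 1, _ => simp [bA_one]
    | (n+2), ih =>
      rcases Nat.even_or_odd (n+2) with ⟨m, hm⟩ | ⟨m, hm⟩
      · have hm' : n + 2 = 2*m := by omega
        rw [hm', bA_two_mul]
        have : (fun i => (2:ℝ)^(i+1)) = fun i => 2 * (2:ℝ)^i := by funext i; ring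
        rw [this, bA_const_mul, ih m (by omega)]
        push_cast [hm']; ring
      · have hm' : n + 2 = 2*m+1 := by omega
        rw [hm', bA_two_mul_add_one]
        have : (fun i => (2:ℝ)^(i+1)) = fun i => 2 * (2:ℝ)^i := by funext i; ring
        rw [this, bA_const_mul, ih m (by omega)]
        push_cast [hm']; ring

lemma sum_getD (g : ℝ → ℝ) : ∀ (l : List ℝ),
    ∑ k ∈ Finset.range l.length, g (l.getD k 0) = (l.map g).sum := by
  intro l
  induction l with
  | nil => simp
  | cons a l ih =>
    rw [List.length_cons, Finset.sum_range_succ']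
    simp only [List.getD_cons_succ, List.getD_cons_zero, List.map_cons, List.sum_cons, ih]
    ring

lemma filter_map_sum (p : ℕ → Bool) (h : ℕ → ℝ) : ∀ n : ℕ,
    (((List.range n).filter p).map h).sum = ∑ i ∈ Finset.range n, if p i then h i else 0 := by
  intro n
  induction n with
  | zero => simp
  | succ n ih =>
    rw [List.range_succ, List.filter_append, List.map_append, List.sum_append,
      Finset.sum_range_succ, ih]
    by_cases hp : p n <;> simp [hp]

/-- Key bridge: a sum of `u` over the entries of `η(N)` equals a digit sum. -/
lemma eta_sum (u : ℝ → ℝ) (N : ℕ) :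
    ∑ k ∈ Finset.range (pbin N), u (eta N k) = bA (fun i => u ((2:ℝ)^i / (N:ℝ))) N := by
  have h1 : ∀ k, eta N k =
      (((binExps N).map fun n => (2:ℝ)^n / (N:ℝ))).getD k 0 := fun k => rfl
  have hlen : pbin N = (((binExps N).map fun n => (2:ℝ)^n / (N:ℝ))).length := by
    simp [pbin]
  calc ∑ k ∈ Finset.range (pbin N), u (eta N k)
      = ∑ k ∈ Finset.range (((binExps N).map fun n => (2:ℝ)^n / (N:ℝ))).length,
          u ((((binExps N).map fun n => (2:ℝ)^n / (N:ℝ))).getD k 0) := by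
        rw [← hlen]
        exact Finset.sum_congr rfl fun k _ => by rw [h1]
    _ = ((((binExps N).map fun n => (2:ℝ)^n / (N:ℝ))).map u).sum := sum_getD u _
    _ = ((binExps N).map fun n => u ((2:ℝ)^n / (N:ℝ))).sum := by rw [List.map_map]; rfl
    _ = bA (fun i => u ((2:ℝ)^i / (N:ℝ))) N := by
        unfold binExps
        rw [List.map_reverse, List.sum_reverse, filter_map_sum]
        rfl

end Aux

section Formulas

variable {s : ℝ}

/-- `F_s(N) = Σ_{i set bit of N} (2^i)^s`. -/
def Fb (s : ℝ) (N : ℕ) : ℝ := bA (fun i => ((2:ℝ)^i) ^ s) N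

/-- `W(N) = Σ_{i set bit of N} i·2^i`. -/
def Wb (N : ℕ) : ℝ := bA (fun i => (i:ℝ) * (2:ℝ)^i) N

lemma Fb_one : Fb s 1 = 1 := by simp [Fb, bA_one, Real.one_rpow]

lemma Fb_two_mul (N : ℕ) : Fb s (2*N) = 2^s * Fb s N := by
  unfold Fb
  rw [bA_two_mul]
  rw [show (fun i => ((2:ℝ)^(i+1)) ^ s) = fun i => (2:ℝ)^s * ((2:ℝ)^i)^s by
    funext i
    rw [pow_succ, mul_comm ((2:ℝ)^i), Real.mul_rpow (by norm_num) (by positivity)]]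
  exact bA_const_mul _ _ _

lemma Fb_two_mul_add_one (N : ℕ) : Fb s (2*N+1) = 2^s * Fb s N + 1 := by
  unfold Fb
  rw [bA_two_mul_add_one]
  rw [show (fun i => ((2:ℝ)^(i+1)) ^ s) = fun i => (2:ℝ)^s * ((2:ℝ)^i)^s by
    funext i
    rw [pow_succ, mul_comm ((2:ℝ)^i), Real.mul_rpow (by norm_num) (by positivity)]]
  rw [bA_const_mul]
  norm_num [Real.one_rpow]

lemma Wb_one : Wb 1 = 0 := by simp [Wb, bA_one]

lemma Wb_rec (N : ℕ) : Wb (2*N) = 2 * Wb N + 2 * N ∧ Wb (2*N+1) = 2 * Wb N + 2 * N := by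
  have key : bA (fun i => ((i:ℕ)+1 : ℕ) * (2:ℝ)^((i:ℕ)+1)) N = 2 * Wb N + 2 * N := by
    have : ∀ i : ℕ, ((i:ℕ)+1 : ℕ) * (2:ℝ)^((i:ℕ)+1) = 2 * ((i:ℝ) * 2^i) + 2 * (2:ℝ)^i := by
      intro i; push_cast; ring
    rw [bA_congr this, bA_add, bA_const_mul, bA_const_mul, bA_pow2]
    rfl
  constructor
  · rw [Wb, bA_two_mul]
    have := key
    simpa using this
  · rw [Wb, bA_two_mul_add_one]
    have := key
    push_cast at this ⊢
    simp [this]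

lemma Geta_eq (N : ℕ) (hN : 1 ≤ N) : Geta N s = Fb s N / (N:ℝ)^s := by
  have hN0 : (0:ℝ) < N := by exact_mod_cast hN
  have : Geta N s = ∑ k ∈ Finset.range (pbin N), (eta N k) ^ s := rfl
  rw [this, eta_sum (fun x => x ^ s) N]
  have : (fun i => ((2:ℝ)^i / (N:ℝ)) ^ s) = fun i => (((2:ℝ)^i) ^ s) / ((N:ℝ)^s) := by
    funext i
    rw [Real.div_rpow (by positivity) hN0.le]
  rw [bA_congr (fun i => congrFun this i), bA_div]
  rfl

lemma Lam_eq (N : ℕ) (hN : 1 ≤ N) :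
    Λeta N = Real.log 2 * Wb N / N - Real.log N := by
  have hN0 : (0:ℝ) < N := by exact_mod_cast hN
  have : Λeta N = ∑ k ∈ Finset.range (pbin N), (eta N k) * Real.log (eta N k) := rfl
  rw [this, eta_sum (fun x => x * Real.log x) N]
  have hterm : ∀ i : ℕ, ((2:ℝ)^i / N) * Real.log ((2:ℝ)^i / N)
      = (Real.log 2 * ((i:ℝ) * 2^i)) / N + (-Real.log N / N) * (2:ℝ)^i := by
    intro i
    rw [Real.log_div (by positivity) hN0.ne', Real.log_pow]
    ring
  rw [bA_congr hterm, bA_add, bA_div, bA_const_mul, bA_const_mul, bA_pow2]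
  unfold Wb
  field_simp
  ring

end Formulas
section RpowLemmas

variable {s : ℝ}

lemma hasDerivAt_diff_rpow (hx : (0:ℝ) < x) :
    HasDerivAt (fun x : ℝ => (x+1)^s - x^s) (s*(x+1)^(s-1) - s*x^(s-1)) x := by
  have h1 : HasDerivAt (fun x : ℝ => (x+1)^s) (s*(x+1)^(s-1)) x := by
    have h := (Real.hasDerivAt_rpow_const (x := x+1) (p := s)
      (Or.inl (by positivity))).comp x ((hasDerivAt_id x).add_const 1)
    simpa [Function.comp_def] using h
  exact h1.sub (Real.hasDerivAt_rpow_const (Or.inl hx.ne'))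

lemma rpow_diff_anti (hs0 : 0 < s) (hs1 : s ≤ 1) :
    AntitoneOn (fun x : ℝ => (x+1)^s - x^s) (Set.Ici 1) := by
  have hint : interior (Set.Ici (1:ℝ)) = Set.Ioi 1 := interior_Ici
  apply antitoneOn_of_deriv_nonpos (convex_Ici 1)
  · intro x hx
    exact ((hasDerivAt_diff_rpow (lt_of_lt_of_le one_pos (by exact hx))).continuousAt).continuousWithinAt
  · rw [hint]
    intro x hx
    exact (hasDerivAt_diff_rpow (lt_trans one_pos hx)).differentiableAt.differentiableWithinAt
  · rw [hint]
    intro x hx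
    have hx0 : (0:ℝ) < x := lt_trans one_pos hx
    rw [(hasDerivAt_diff_rpow hx0).deriv]
    have : (x+1)^(s-1) ≤ x^(s-1) :=
      Real.rpow_le_rpow_of_nonpos hx0 (by linarith) (by linarith)
    nlinarith [hs0]

lemma rpow_diff_mono (hs1 : 1 ≤ s) :
    MonotoneOn (fun x : ℝ => (x+1)^s - x^s) (Set.Ici 1) := by
  have hint : interior (Set.Ici (1:ℝ)) = Set.Ioi 1 := interior_Ici
  apply monotoneOn_of_deriv_nonneg (convex_Ici 1)
  · intro x hx
    exact ((hasDerivAt_diff_rpow (lt_of_lt_of_le one_pos (by exact hx))).continuousAt).continuousWithinAt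
  · rw [hint]
    intro x hx
    exact (hasDerivAt_diff_rpow (lt_trans one_pos hx)).differentiableAt.differentiableWithinAt
  · rw [hint]
    intro x hx
    have hx0 : (0:ℝ) < x := lt_trans one_pos hx
    rw [(hasDerivAt_diff_rpow hx0).deriv]
    have : x^(s-1) ≤ (x+1)^(s-1) :=
      Real.rpow_le_rpow hx0.le (by linarith) (by linarith)
    nlinarith [hs1]

lemma rpow_succ_diff_le (hs0 : 0 < s) (hs1 : s ≤ 1) {y : ℝ} (hy : 1 ≤ y) :
    (y+1)^s - y^s ≤ (2:ℝ)^s - 1 := by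
  have h := rpow_diff_anti hs0 hs1 (Set.self_mem_Ici) hy hy
  simpa [Real.one_rpow, one_add_one_eq_two] using h

lemma rpow_succ_diff_ge (hs1 : 1 ≤ s) {y : ℝ} (hy : 1 ≤ y) :
    (2:ℝ)^s - 1 ≤ (y+1)^s - y^s := by
  have h := rpow_diff_mono hs1 (Set.self_mem_Ici) hy hy
  simpa [Real.one_rpow, one_add_one_eq_two] using h

lemma rpow_add_one_le (hs0 : 0 ≤ s) (hs1 : s ≤ 1) {y : ℝ} (hy : 0 ≤ y) :
    (y+1)^s ≤ y^s + 1 := by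
  have h := NNReal.rpow_add_le_add_rpow (Real.toNNReal y) 1 hs0 hs1
  rw [← NNReal.coe_le_coe] at h
  push_cast [NNReal.coe_rpow, Real.coe_toNNReal _ hy, Real.one_rpow] at h
  exact h

lemma rpow_add_one_ge (hs1 : 1 ≤ s) {y : ℝ} (hy : 0 ≤ y) :
    y^s + 1 ≤ (y+1)^s := by
  have h := NNReal.add_rpow_le_rpow_add (Real.toNNReal y) 1 hs1
  rw [← NNReal.coe_le_coe] at h
  push_cast [NNReal.coe_rpow, Real.coe_toNNReal _ hy, Real.one_rpow] at h
  exact h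

lemma one_lt_two_rpow (hs : 0 < s) : (1:ℝ) < 2^s := by
  have := Real.rpow_lt_rpow_left_iff (x := (2:ℝ)) (y := 0) (z := s) one_lt_two
  simpa [Real.rpow_zero] using this.mpr hs

lemma binary_ind (P : ℕ → Prop) (h1 : P 1) (h2 : ∀ N, 1 ≤ N → P N → P (2*N))
    (h3 : ∀ N, 1 ≤ N → P N → P (2*N+1)) : ∀ N, 1 ≤ N → P N := by
  intro N
  induction N using Nat.strong_induction_on with
  | _ N ih =>
    intro hN
    rcases eq_or_lt_of_le hN with h | h
    · rw [← h]; exact h1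
    · have hM : 1 ≤ N/2 := by omega
      have hlt : N/2 < N := by omega
      have := ih (N/2) hlt hM
      rcases Nat.even_or_odd N with ⟨m, hm⟩ | ⟨m, hm⟩
      · have : N = 2*(N/2) := by omega
        rw [this]; exact h2 _ hM (ih _ hlt hM)
      · have : N = 2*(N/2)+1 := by omega
        rw [this]; exact h3 _ hM (ih _ hlt hM)

end RpowLemmas
section GBounds

variable {s : ℝ}

lemma two_rpow_sub_one_pos (hs : 0 < s) : (0:ℝ) < 2^s - 1 := by
  linarith [one_lt_two_rpow hs]

lemma cast_two_mul_rpow (N : ℕ) : ((2*N : ℕ):ℝ)^s = 2^s * (N:ℝ)^s := by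
  push_cast
  rw [Real.mul_rpow (by norm_num) (Nat.cast_nonneg N)]

lemma two_mul_add_two_rpow (N : ℕ) : (2*(N:ℝ)+1+1)^s = 2^s * ((N:ℝ)+1)^s := by
  rw [show 2*(N:ℝ)+1+1 = 2*((N:ℝ)+1) by ring,
    Real.mul_rpow (by norm_num) (by positivity)]

lemma Fb_lower (hs0 : 0 < s) (hs1 : s ≤ 1) : ∀ N : ℕ, 1 ≤ N → (N:ℝ)^s ≤ Fb s N := by
  apply binary_ind
  · simpa [Fb_one] using (Real.one_rpow s).le
  · intro N hN ih
    rw [Fb_two_mul, cast_two_mul_rpow]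
    have h2 : (0:ℝ) < 2^s := by positivity
    nlinarith
  · intro N hN ih
    rw [Fb_two_mul_add_one]
    have h2 : (0:ℝ) < 2^s := by positivity
    have hsub : (2*(N:ℝ)+1)^s ≤ (2*(N:ℝ))^s + 1 := by
      have := rpow_add_one_le hs0.le hs1 (y := 2*(N:ℝ)) (by positivity)
      linarith
    have hmul : (2*(N:ℝ))^s = 2^s * (N:ℝ)^s :=
      Real.mul_rpow (by norm_num) (Nat.cast_nonneg N)
    push_cast
    nlinarith

lemma Fb_upper (hs0 : 0 < s) (hs1 : s ≤ 1) :
    ∀ N : ℕ, 1 ≤ N → (2^s - 1) * Fb s N + 1 ≤ ((N:ℝ)+1)^s := by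
  apply binary_ind
  · rw [Fb_one]
    have : ((1:ℕ):ℝ) + 1 = 2 := by norm_num
    rw [this]; ring_nf; norm_num
  · intro N hN ih
    rw [Fb_two_mul]
    have hN1 : (1:ℝ) ≤ (N:ℝ) := by exact_mod_cast hN
    have hdiff : (2*(N:ℝ)+1+1)^s - (2*(N:ℝ)+1)^s ≤ 2^s - 1 :=
      rpow_succ_diff_le hs0 hs1 (by linarith)
    have h2 : (2*(N:ℝ)+1+1)^s = 2^s * ((N:ℝ)+1)^s := two_mul_add_two_rpow N
    have h2pos : (0:ℝ) < 2^s := by positivity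
    have key : 2^s * ((2^s-1) * Fb s N + 1) ≤ 2^s * ((N:ℝ)+1)^s :=
      mul_le_mul_of_nonneg_left ih h2pos.le
    push_cast
    nlinarith
  · intro N hN ih
    rw [Fb_two_mul_add_one]
    have h2 : (2*(N:ℝ)+1+1)^s = 2^s * ((N:ℝ)+1)^s := two_mul_add_two_rpow N
    have h2pos : (0:ℝ) < 2^s := by positivity
    have key : 2^s * ((2^s-1) * Fb s N + 1) ≤ 2^s * ((N:ℝ)+1)^s :=
      mul_le_mul_of_nonneg_left ih h2pos.le
    push_cast
    nlinarith

lemma Fb_lower' (hs1 : 1 ≤ s) : ∀ N : ℕ, 1 ≤ N → Fb s N ≤ (N:ℝ)^s := by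
  have hs0 : (0:ℝ) < s := lt_of_lt_of_le one_pos hs1
  apply binary_ind
  · simpa [Fb_one] using (Real.one_rpow s).ge
  · intro N hN ih
    rw [Fb_two_mul, cast_two_mul_rpow]
    have h2 : (0:ℝ) < 2^s := by positivity
    nlinarith
  · intro N hN ih
    rw [Fb_two_mul_add_one]
    have h2 : (0:ℝ) < 2^s := by positivity
    have hsub : (2*(N:ℝ))^s + 1 ≤ (2*(N:ℝ)+1)^s := by
      have := rpow_add_one_ge hs1 (y := 2*(N:ℝ)) (by positivity)
      linarith
    have hmul : (2*(N:ℝ))^s = 2^s * (N:ℝ)^s :=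
      Real.mul_rpow (by norm_num) (Nat.cast_nonneg N)
    push_cast
    nlinarith

lemma Fb_upper' (hs1 : 1 ≤ s) :
    ∀ N : ℕ, 1 ≤ N → ((N:ℝ)+1)^s ≤ (2^s - 1) * Fb s N + 1 := by
  apply binary_ind
  · rw [Fb_one]
    have : ((1:ℕ):ℝ) + 1 = 2 := by norm_num
    rw [this]; ring_nf; norm_num
  · intro N hN ih
    rw [Fb_two_mul]
    have hN1 : (1:ℝ) ≤ (N:ℝ) := by exact_mod_cast hN
    have hdiff : 2^s - 1 ≤ (2*(N:ℝ)+1+1)^s - (2*(N:ℝ)+1)^s :=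
      rpow_succ_diff_ge hs1 (by linarith)
    have h2 : (2*(N:ℝ)+1+1)^s = 2^s * ((N:ℝ)+1)^s := two_mul_add_two_rpow N
    have h2pos : (0:ℝ) < 2^s := by positivity
    have key : 2^s * ((N:ℝ)+1)^s ≤ 2^s * ((2^s-1) * Fb s N + 1) :=
      mul_le_mul_of_nonneg_left ih h2pos.le
    push_cast
    nlinarith
  · intro N hN ih
    rw [Fb_two_mul_add_one]
    have h2 : (2*(N:ℝ)+1+1)^s = 2^s * ((N:ℝ)+1)^s := two_mul_add_two_rpow N
    have h2pos : (0:ℝ) < 2^s := by positivity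
    have key : 2^s * ((N:ℝ)+1)^s ≤ 2^s * ((2^s-1) * Fb s N + 1) :=
      mul_le_mul_of_nonneg_left ih h2pos.le
    push_cast
    nlinarith

lemma Geta_ge_one (hs0 : 0 < s) (hs1 : s ≤ 1) {N : ℕ} (hN : 1 ≤ N) : 1 ≤ Geta N s := by
  rw [Geta_eq N hN]
  have hNpos : (0:ℝ) < (N:ℝ)^s := by
    have : (0:ℝ) < N := by exact_mod_cast hN
    positivity
  rw [le_div_iff₀ hNpos, one_mul]
  exact Fb_lower hs0 hs1 N hN

lemma Geta_le_c (hs0 : 0 < s) (hs1 : s ≤ 1) {N : ℕ} (hN : 1 ≤ N) :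
    Geta N s ≤ 1/(2^s - 1) := by
  rw [Geta_eq N hN]
  have hc := two_rpow_sub_one_pos hs0
  have hNR : (0:ℝ) < N := by exact_mod_cast hN
  have hNpos : (0:ℝ) < (N:ℝ)^s := by positivity
  have h1 : (2^s - 1) * Fb s N ≤ (N:ℝ)^s := by
    have h2 := Fb_upper hs0 hs1 N hN
    have h3 : ((N:ℝ)+1)^s ≤ (N:ℝ)^s + 1 := rpow_add_one_le hs0.le hs1 hNR.le
    linarith
  rw [div_le_div_iff₀ hNpos hc]
  nlinarith

lemma Geta_le_one (hs1 : 1 ≤ s) {N : ℕ} (hN : 1 ≤ N) : Geta N s ≤ 1 := by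
  rw [Geta_eq N hN]
  have hNpos : (0:ℝ) < (N:ℝ)^s := by
    have : (0:ℝ) < N := by exact_mod_cast hN
    positivity
  rw [div_le_iff₀ hNpos, one_mul]
  exact Fb_lower' hs1 N hN

lemma Geta_ge_c (hs0 : 0 < s) (hs1 : 1 ≤ s) {N : ℕ} (hN : 1 ≤ N) :
    1/(2^s - 1) ≤ Geta N s := by
  rw [Geta_eq N hN]
  have hc := two_rpow_sub_one_pos hs0
  have hNR : (0:ℝ) < N := by exact_mod_cast hN
  have hNpos : (0:ℝ) < (N:ℝ)^s := by positivity
  have h1 : (N:ℝ)^s ≤ (2^s - 1) * Fb s N := by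
    have h2 := Fb_upper' hs1 N hN
    have h3 : (N:ℝ)^s + 1 ≤ ((N:ℝ)+1)^s := rpow_add_one_ge hs1 hNR.le
    linarith
  rw [div_le_div_iff₀ hc hNpos]
  nlinarith

end GBounds
section LamSide

/-- Limit of `Λ(η(·))` along "always append ones" starting from `N`. -/
def fl (N : ℕ) : ℝ :=
  (Real.log 2 * Wb N - 2*Real.log 2)/((N:ℝ)+1) - Real.log ((N:ℝ)+1)

lemma bA_nonneg {f : ℕ → ℝ} (hf : ∀ i, 0 ≤ f i) (N : ℕ) : 0 ≤ bA f N := by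
  unfold bA
  refine Finset.sum_nonneg fun i _ => ?_
  split
  · exact hf i
  · exact le_rfl

lemma Wb_nonneg (N : ℕ) : 0 ≤ Wb N :=
  bA_nonneg (fun i => by positivity) N

lemma Lam_one : Λeta 1 = 0 := by
  rw [Lam_eq 1 le_rfl, Wb_one]
  norm_num

lemma fl_one : fl 1 = -(2*Real.log 2) := by
  rw [fl, Wb_one]
  norm_num
  ring

lemma Lam_two_mul {N : ℕ} (hN : 1 ≤ N) : Λeta (2*N) = Λeta N := by
  have hN0 : (0:ℝ) < N := by exact_mod_cast hN
  rw [Lam_eq (2*N) (by omega), Lam_eq N hN, (Wb_rec N).1]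
  have hlog : Real.log ((2*N:ℕ):ℝ) = Real.log 2 + Real.log N := by
    push_cast
    rw [Real.log_mul (by norm_num) hN0.ne']
  rw [hlog]
  push_cast
  field_simp
  ring

lemma fl_eq_Lam_succ {N : ℕ} (hN : 1 ≤ N) :
    fl (2*N) = Λeta (2*N+1) - 2*Real.log 2/(2*(N:ℝ)+1) := by
  rw [fl, Lam_eq (2*N+1) (by omega), (Wb_rec N).1, (Wb_rec N).2]
  push_cast
  ring_nf

lemma fl_two_mul_add_one (N : ℕ) : fl (2*N+1) = fl N := by
  have hN1 : (0:ℝ) < (N:ℝ)+1 := by positivity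
  have hlog : Real.log (((2*N+1:ℕ):ℝ) + 1) = Real.log 2 + Real.log ((N:ℝ)+1) := by
    push_cast
    rw [show 2*(N:ℝ)+1+1 = 2*((N:ℝ)+1) by ring, Real.log_mul (by norm_num) hN1.ne']
  rw [fl, fl, (Wb_rec N).2, hlog]
  push_cast
  field_simp
  ring

lemma Lam_nonpos : ∀ N : ℕ, 1 ≤ N → Λeta N ≤ 0 := by
  apply binary_ind
  · exact Lam_one.le
  · intro N hN ih
    rw [Lam_two_mul hN]; exact ih
  · intro N hN ih
    have hx : (1:ℝ) ≤ (N:ℝ) := by exact_mod_cast hN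
    have hx0 : (0:ℝ) < N := by linarith
    have hW : Real.log 2 * Wb N ≤ Real.log (N:ℝ) * (N:ℝ) := by
      rw [Lam_eq N hN] at ih
      exact (div_le_iff₀ hx0).mp (by linarith)
    rw [Lam_eq (2*N+1) (by omega), (Wb_rec N).2]
    push_cast
    have hy : (0:ℝ) < 2*(N:ℝ)+1 := by linarith
    rw [sub_nonpos, div_le_iff₀ hy]
    have h4 : Real.log (2*(N:ℝ)) = Real.log 2 + Real.log N :=
      Real.log_mul (by norm_num) hx0.ne'
    have h3 : Real.log (2*(N:ℝ)) ≤ Real.log (2*(N:ℝ)+1) :=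
      Real.log_le_log (by linarith) (by linarith)
    have h5 : 0 ≤ Real.log (2*(N:ℝ)+1) := Real.log_nonneg (by linarith)
    have p : 2*(N:ℝ)*Real.log (2*(N:ℝ)) ≤ 2*(N:ℝ)*Real.log (2*(N:ℝ)+1) :=
      mul_le_mul_of_nonneg_left h3 (by linarith)
    have q : 2*(N:ℝ)*Real.log (2*(N:ℝ)) = 2*(N:ℝ)*(Real.log 2 + Real.log N) := by
      rw [h4]
    linarith [hW, h5, p, q]

lemma fl_ge : ∀ N : ℕ, 1 ≤ N → -(2*Real.log 2) ≤ fl N := by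
  apply binary_ind
  · exact fl_one.ge
  · intro N hN ih
    have hx : (1:ℝ) ≤ (N:ℝ) := by exact_mod_cast hN
    have hx1 : (0:ℝ) < (N:ℝ)+1 := by linarith
    have hy : (0:ℝ) < 2*(N:ℝ)+1 := by linarith
    have hWb : Real.log 2 * Wb N
        = ((N:ℝ)+1)*(fl N + Real.log ((N:ℝ)+1)) + 2*Real.log 2 := by
      rw [fl]
      field_simp
      ring
    have hA : Real.log (2*(N:ℝ)+1) ≤ Real.log 2 + Real.log ((N:ℝ)+1) := by
      have h := Real.log_le_log hy (by linarith : 2*(N:ℝ)+1 ≤ 2*((N:ℝ)+1))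
      rwa [Real.log_mul (by norm_num) hx1.ne'] at h
    have hB : Real.log 2 ≤ Real.log ((N:ℝ)+1) :=
      Real.log_le_log (by norm_num) (by linarith)
    have p1 : ((N:ℝ)+1)*(-(2*Real.log 2)) ≤ ((N:ℝ)+1)*(fl N) :=
      mul_le_mul_of_nonneg_left ih (by linarith)
    have p2 : (2*(N:ℝ)+1)*Real.log (2*(N:ℝ)+1)
        ≤ (2*(N:ℝ)+1)*(Real.log 2 + Real.log ((N:ℝ)+1)) :=
      mul_le_mul_of_nonneg_left hA hy.le
    have num_nonneg : 0 ≤ Real.log 2 * (2*Wb N + 2*(N:ℝ)) - 2*Real.log 2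
        - (2*(N:ℝ)+1)*(Real.log (2*(N:ℝ)+1) - 2*Real.log 2) := by
      linarith [hWb, p1, p2, hB]
    have key : fl (2*N) + 2*Real.log 2
        = (Real.log 2 * (2*Wb N + 2*(N:ℝ)) - 2*Real.log 2
            - (2*(N:ℝ)+1)*(Real.log (2*(N:ℝ)+1) - 2*Real.log 2)) / (2*(N:ℝ)+1) := by
      rw [fl, (Wb_rec N).1]
      push_cast
      field_simp
      ring
    have hdiv := div_nonneg num_nonneg hy.le
    linarith [key, hdiv]
  · intro N hN ih
    rw [fl_two_mul_add_one]; exact ih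

lemma Lam_ge : ∀ N : ℕ, 1 ≤ N → -(2*Real.log 2) ≤ Λeta N := by
  apply binary_ind
  · rw [Lam_one]
    have := Real.log_pos one_lt_two
    linarith
  · intro N hN ih
    rw [Lam_two_mul hN]; exact ih
  · intro N hN ih
    have h := fl_eq_Lam_succ hN
    have h2 := fl_ge (2*N) (by omega)
    have hy : (0:ℝ) < 2*(N:ℝ)+1 := by positivity
    have h3 : 0 ≤ 2*Real.log 2/(2*(N:ℝ)+1) := by
      have := Real.log_nonneg (by norm_num : (1:ℝ) ≤ 2)
      positivity
    linarith [h, h2, h3]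

lemma Lam_sub_fl_bounds {N : ℕ} (hN : 1 ≤ N) :
    0 ≤ Λeta N - fl N ∧
    Λeta N - fl N ≤ Real.log ((N:ℝ)+1)/((N:ℝ)+1) + 2*Real.log 2/((N:ℝ)+1) + 1/(N:ℝ) := by
  have hx : (1:ℝ) ≤ (N:ℝ) := by exact_mod_cast hN
  have hx0 : (0:ℝ) < N := by linarith
  have hx1 : (0:ℝ) < (N:ℝ)+1 := by linarith
  have hsplit : Λeta N - fl N
      = Real.log 2 * Wb N / ((N:ℝ)*((N:ℝ)+1)) + 2*Real.log 2/((N:ℝ)+1)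
        + (Real.log ((N:ℝ)+1) - Real.log (N:ℝ)) := by
    rw [Lam_eq N hN, fl]
    field_simp
    ring
  have hlog2 : 0 ≤ Real.log 2 := Real.log_nonneg (by norm_num)
  have hWpos : 0 ≤ Real.log 2 * Wb N / ((N:ℝ)*((N:ℝ)+1)) := by
    have := Wb_nonneg N
    positivity
  have hlmono : Real.log (N:ℝ) ≤ Real.log ((N:ℝ)+1) :=
    Real.log_le_log hx0 (by linarith)
  constructor
  · rw [hsplit]
    have : 0 ≤ 2*Real.log 2/((N:ℝ)+1) := by positivity
    linarith
  · rw [hsplit]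
    have hW : Real.log 2 * Wb N ≤ Real.log (N:ℝ) * (N:ℝ) := by
      have h := Lam_nonpos N hN
      rw [Lam_eq N hN] at h
      exact (div_le_iff₀ hx0).mp (by linarith)
    have hlogN0 : 0 ≤ Real.log (N:ℝ) := Real.log_nonneg hx
    have t1 : Real.log 2 * Wb N / ((N:ℝ)*((N:ℝ)+1)) ≤ Real.log ((N:ℝ)+1)/((N:ℝ)+1) := by
      rw [div_le_div_iff₀ (by positivity) hx1]
      have h1 : Real.log 2 * Wb N ≤ Real.log ((N:ℝ)+1) * (N:ℝ) := by
        have := mul_le_mul_of_nonneg_right hlmono hx0.le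
        nlinarith
      nlinarith
    have t3 : Real.log ((N:ℝ)+1) - Real.log (N:ℝ) ≤ 1/(N:ℝ) := by
      have hd : Real.log (((N:ℝ)+1)/(N:ℝ)) = Real.log ((N:ℝ)+1) - Real.log (N:ℝ) :=
        Real.log_div (by linarith) hx0.ne'
      have hb := Real.log_le_sub_one_of_pos (show (0:ℝ) < ((N:ℝ)+1)/(N:ℝ) by positivity)
      rw [hd] at hb
      have : ((N:ℝ)+1)/(N:ℝ) - 1 = 1/(N:ℝ) := by field_simp; ring
      linarith [this ▸ hb]
    linarith

lemma Lam_gap : Tendsto (fun N : ℕ => Λeta N - fl N) atTop (𝓝 0) := by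
  have hup : Tendsto (fun N : ℕ =>
      Real.log ((N:ℝ)+1)/((N:ℝ)+1) + 2*Real.log 2/((N:ℝ)+1) + 1/(N:ℝ)) atTop (𝓝 0) := by
    have hnat : Tendsto (fun N : ℕ => (N:ℝ)+1) atTop atTop :=
      tendsto_atTop_add_const_right _ 1 tendsto_natCast_atTop_atTop
    have h1 : Tendsto (fun N : ℕ => Real.log ((N:ℝ)+1)/((N:ℝ)+1)) atTop (𝓝 0) :=
      (Real.isLittleO_log_id_atTop.tendsto_div_nhds_zero).comp hnat
    have h2 : Tendsto (fun N : ℕ => 2*Real.log 2/((N:ℝ)+1)) atTop (𝓝 0) := by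
      have := hnat.inv_tendsto_atTop
      have h3 := this.const_mul (2*Real.log 2)
      simpa [div_eq_mul_inv] using h3
    have h3 : Tendsto (fun N : ℕ => 1/(N:ℝ)) atTop (𝓝 0) := by
      have := tendsto_natCast_atTop_atTop (R := ℝ) |>.inv_tendsto_atTop
      simpa [one_div, Pi.inv_def] using this
    have := (h1.add h2).add h3
    simpa using this
  refine tendsto_of_tendsto_of_tendsto_of_le_of_le' tendsto_const_nhds hup ?_ ?_
  · filter_upwards [eventually_ge_atTop 1] with N hN
    exact (Lam_sub_fl_bounds hN).1
  · filter_upwards [eventually_ge_atTop 1] with N hN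
    exact (Lam_sub_fl_bounds hN).2

end LamSide
section ReachG

variable {s : ℝ}

/-- Limit of `G(η(·); s)` along "always append ones" starting from `N`. -/
def reachG (s : ℝ) (N : ℕ) : ℝ := (Fb s N + 1/(2^s-1))/((N:ℝ)+1)^s

lemma Fb_nonneg (N : ℕ) : 0 ≤ Fb s N :=
  bA_nonneg (fun i => Real.rpow_nonneg (by positivity) s) N

lemma Geta_nonneg {N : ℕ} (hN : 1 ≤ N) : 0 ≤ Geta N s := by
  rw [Geta_eq N hN]
  have : (0:ℝ) < N := by exact_mod_cast hN
  have := Fb_nonneg (s := s) N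
  positivity

lemma Geta_one : Geta 1 s = 1 := by
  rw [Geta_eq 1 le_rfl, Fb_one]
  norm_num

lemma Geta_two_mul (hs0 : 0 < s) {N : ℕ} (hN : 1 ≤ N) : Geta (2*N) s = Geta N s := by
  have hN0 : (0:ℝ) < N := by exact_mod_cast hN
  rw [Geta_eq (2*N) (by omega), Geta_eq N hN, Fb_two_mul, cast_two_mul_rpow]
  have h2 : (0:ℝ) < 2^s := by positivity
  have hNs : (0:ℝ) < (N:ℝ)^s := by positivity
  field_simp

lemma reachG_one (hs0 : 0 < s) : reachG s 1 = 1/(2^s-1) := by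
  have hd := two_rpow_sub_one_pos hs0
  rw [reachG, Fb_one]
  have h1 : ((1:ℕ):ℝ) + 1 = 2 := by norm_num
  rw [h1]
  have h2 : (0:ℝ) < 2^s := by positivity
  field_simp
  linarith

lemma reachG_two_mul_add_one (hs0 : 0 < s) (N : ℕ) : reachG s (2*N+1) = reachG s N := by
  have hd := two_rpow_sub_one_pos hs0
  have h2 : (0:ℝ) < 2^s := by positivity
  have hden : (0:ℝ) < ((N:ℝ)+1)^s := by positivity
  rw [reachG, reachG, Fb_two_mul_add_one]
  push_cast
  rw [two_mul_add_two_rpow]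
  field_simp
  ring

lemma Geta_succ_le_reach (hs0 : 0 < s) (hs1 : s ≤ 1) (N : ℕ) :
    Geta (2*N+1) s ≤ reachG s (2*N) := by
  have hd := two_rpow_sub_one_pos hs0
  have hc1 : (1:ℝ) ≤ 1/(2^s-1) := by
    rw [le_div_iff₀ hd]
    have : (2:ℝ)^s ≤ 2 := by
      have := Real.rpow_le_rpow_of_exponent_le (one_le_two) hs1
      rwa [Real.rpow_one] at this
    linarith
  have hden : (0:ℝ) < (2*(N:ℝ)+1)^s := by positivity
  rw [Geta_eq (2*N+1) (by omega), reachG, Fb_two_mul_add_one, Fb_two_mul]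
  push_cast
  gcongr

lemma reach_le_Geta_succ (hs1 : 1 ≤ s) (N : ℕ) :
    reachG s (2*N) ≤ Geta (2*N+1) s := by
  have hs0 : (0:ℝ) < s := lt_of_lt_of_le one_pos hs1
  have hd := two_rpow_sub_one_pos hs0
  have hc1 : (1:ℝ)/(2^s-1) ≤ 1 := by
    rw [div_le_one hd]
    have : (2:ℝ) ≤ 2^s := by
      have := Real.rpow_le_rpow_of_exponent_le (one_le_two) hs1
      rwa [Real.rpow_one] at this
    linarith
  have hden : (0:ℝ) < (2*(N:ℝ)+1)^s := by positivity
  rw [Geta_eq (2*N+1) (by omega), reachG, Fb_two_mul_add_one, Fb_two_mul]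
  push_cast
  gcongr

lemma reach_sub_Geta (hs0 : 0 < s) {N : ℕ} (hN : 1 ≤ N) :
    reachG s N - Geta N s
      = (1/(2^s-1))/((N:ℝ)+1)^s - Geta N s * (1 - ((N:ℝ)/((N:ℝ)+1))^s) := by
  have hN0 : (0:ℝ) < N := by exact_mod_cast hN
  have hN1 : (0:ℝ) < (N:ℝ)+1 := by linarith
  have hq : ((N:ℝ)/((N:ℝ)+1))^s = (N:ℝ)^s/((N:ℝ)+1)^s :=
    Real.div_rpow hN0.le hN1.le s
  have hNs : (0:ℝ) < (N:ℝ)^s := by positivity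
  have hN1s : (0:ℝ) < ((N:ℝ)+1)^s := by positivity
  have hGq : Geta N s * ((N:ℝ)^s/((N:ℝ)+1)^s) = Fb s N/((N:ℝ)+1)^s := by
    rw [Geta_eq N hN]
    field_simp
  rw [reachG, hq, add_div, mul_sub, mul_one, hGq]
  ring

lemma G_gap (hs0 : 0 < s) (K : ℝ) (hK0 : 0 ≤ K) (hK : ∀ N : ℕ, 1 ≤ N → Geta N s ≤ K) :
    Tendsto (fun N : ℕ => reachG s N - Geta N s) atTop (𝓝 0) := by
  have hd := two_rpow_sub_one_pos hs0
  have hnat : Tendsto (fun N : ℕ => (N:ℝ)+1) atTop atTop :=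
    tendsto_atTop_add_const_right _ 1 tendsto_natCast_atTop_atTop
  -- upper sequence
  have hup : Tendsto (fun N : ℕ => (1/(2^s-1))/((N:ℝ)+1)^s) atTop (𝓝 0) := by
    have h1 : Tendsto (fun N : ℕ => ((N:ℝ)+1)^s) atTop atTop :=
      (tendsto_rpow_atTop hs0).comp hnat
    have h2 := h1.inv_tendsto_atTop
    have h3 := h2.const_mul (1/(2^s-1))
    simpa [div_eq_mul_inv] using h3
  -- q_N → 1
  have hq : Tendsto (fun N : ℕ => ((N:ℝ)/((N:ℝ)+1))^s) atTop (𝓝 1) := by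
    have hb : Tendsto (fun N : ℕ => (N:ℝ)/((N:ℝ)+1)) atTop (𝓝 1) := by
      have h0 := tendsto_one_div_add_atTop_nhds_zero_nat (𝕜 := ℝ)
      have h1 := (tendsto_const_nhds : Tendsto (fun _ : ℕ => (1:ℝ)) atTop (𝓝 1)).sub h0
      have heq : (fun N : ℕ => 1 - 1/((N:ℝ)+1)) = fun N : ℕ => (N:ℝ)/((N:ℝ)+1) := by
        funext N
        have : ((N:ℝ)+1) ≠ 0 := by positivity
        field_simp
        ring
      rw [heq] at h1
      simpa using h1
    have hcont : ContinuousAt (fun x : ℝ => x^s) 1 :=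
      Real.continuousAt_rpow_const 1 s (Or.inr hs0.le)
    have := hcont.tendsto.comp hb
    simpa [Real.one_rpow, Function.comp_def] using this
  have hlow : Tendsto (fun N : ℕ => -(K * (1 - ((N:ℝ)/((N:ℝ)+1))^s))) atTop (𝓝 0) := by
    have h1 := (tendsto_const_nhds : Tendsto (fun _ : ℕ => (1:ℝ)) atTop (𝓝 1)).sub hq
    have h2 := h1.const_mul K
    have h3 := h2.neg
    simpa using h3
  refine tendsto_of_tendsto_of_tendsto_of_le_of_le' hlow hup ?_ ?_
  · filter_upwards [eventually_ge_atTop 1] with N hN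
    rw [reach_sub_Geta hs0 hN]
    have hN0 : (0:ℝ) < N := by exact_mod_cast hN
    have hq1 : ((N:ℝ)/((N:ℝ)+1))^s ≤ 1 :=
      Real.rpow_le_one (by positivity) (by rw [div_le_one (by positivity)]; linarith) hs0.le
    have hGK := hK N hN
    have hpos : (0:ℝ) ≤ (1/(2^s-1))/((N:ℝ)+1)^s := by positivity
    nlinarith [Geta_nonneg (s := s) hN]
  · filter_upwards [eventually_ge_atTop 1] with N hN
    rw [reach_sub_Geta hs0 hN]
    have hN0 : (0:ℝ) < N := by exact_mod_cast hN
    have hq1 : ((N:ℝ)/((N:ℝ)+1))^s ≤ 1 :=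
      Real.rpow_le_one (by positivity) (by rw [div_le_one (by positivity)]; linarith) hs0.le
    nlinarith [Geta_nonneg (s := s) hN]

end ReachG
section Steering

lemma steering (v r : ℕ → ℝ) (L : ℝ)
    (h0 : ∀ N : ℕ, 1 ≤ N → v (2*N) = v N)
    (h1 : ∀ N : ℕ, 1 ≤ N → r (2*N+1) = r N)
    (h2 : ∀ N : ℕ, 1 ≤ N → v (2*N+1) ≤ r (2*N))
    (hv1 : v 1 ≤ L) (hr1 : L ≤ r 1)
    (hgap : Tendsto (fun N : ℕ => r N - v N) atTop (𝓝 0)) :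
    ∃ φ : ℕ → ℕ, StrictMono φ ∧ Tendsto (fun m => v (φ m + 1)) atTop (𝓝 L) := by
  classical
  let T : ℕ → ℕ := fun M => if v (2*M+1) ≤ L then 2*M+1 else 2*M
  let Ns : ℕ → ℕ := fun k => Nat.rec 1 (fun _ M => T M) k
  have hNs0 : Ns 0 = 1 := rfl
  have hNsS : ∀ k, Ns (k+1) = if v (2*(Ns k)+1) ≤ L then 2*(Ns k)+1 else 2*(Ns k) := fun k => rfl
  have hge1 : ∀ k, 1 ≤ Ns k := by
    intro k; induction k with
    | zero => exact le_rfl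
    | succ k ih =>
      rw [hNsS]
      split <;> omega
  have hmono : ∀ k, Ns k < Ns (k+1) := by
    intro k
    have := hge1 k
    rw [hNsS]
    split <;> omega
  have hsm : StrictMono Ns := strictMono_nat_of_lt_succ hmono
  have hinv : ∀ k, v (Ns k) ≤ L ∧ L ≤ r (Ns k) := by
    intro k; induction k with
    | zero => exact ⟨hv1, hr1⟩
    | succ k ih =>
      rw [hNsS]
      by_cases hcase : v (2*(Ns k)+1) ≤ L
      · rw [if_pos hcase]
        exact ⟨hcase, by rw [h1 _ (hge1 k)]; exact ih.2⟩
      · rw [if_neg hcase]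
        refine ⟨by rw [h0 _ (hge1 k)]; exact ih.1, ?_⟩
        exact le_trans (le_of_lt (lt_of_not_ge hcase)) (h2 _ (hge1 k))
  have hgap' : Tendsto (fun k => r (Ns k) - v (Ns k)) atTop (𝓝 0) :=
    hgap.comp hsm.tendsto_atTop
  have hLd : Tendsto (fun k => L - v (Ns k)) atTop (𝓝 0) := by
    refine tendsto_of_tendsto_of_tendsto_of_le_of_le' tendsto_const_nhds hgap' ?_ ?_
    · exact Eventually.of_forall fun k => by linarith [(hinv k).1]
    · exact Eventually.of_forall fun k => by linarith [(hinv k).1, (hinv k).2]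
  have hvL : Tendsto (fun k => v (Ns k)) atTop (𝓝 L) := by
    have := (tendsto_const_nhds : Tendsto (fun _ : ℕ => L) atTop (𝓝 L)).sub hLd
    simpa using this
  refine ⟨fun m => Ns m - 1, ?_, ?_⟩
  · intro a b hab
    have h1' := hsm hab
    have h2' := hge1 a
    show Ns a - 1 < Ns b - 1
    omega
  · have heq : (fun m => v (Ns m - 1 + 1)) = fun m => v (Ns m) := by
      funext m
      congr 1
      have := hge1 m
      omega
    rw [heq]
    exact hvL

lemma steering' (v r : ℕ → ℝ) (L : ℝ)
    (h0 : ∀ N : ℕ, 1 ≤ N → v (2*N) = v N)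
    (h1 : ∀ N : ℕ, 1 ≤ N → r (2*N+1) = r N)
    (h2 : ∀ N : ℕ, 1 ≤ N → r (2*N) ≤ v (2*N+1))
    (hv1 : L ≤ v 1) (hr1 : r 1 ≤ L)
    (hgap : Tendsto (fun N : ℕ => v N - r N) atTop (𝓝 0)) :
    ∃ φ : ℕ → ℕ, StrictMono φ ∧ Tendsto (fun m => v (φ m + 1)) atTop (𝓝 L) := by
  obtain ⟨φ, hφ, ht⟩ := steering (fun N => -v N) (fun N => -r N) (-L)
    (fun N hN => by simp [h0 N hN]) (fun N hN => by simp [h1 N hN])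
    (fun N hN => by simpa using h2 N hN) (by simpa using hv1) (by simpa using hr1)
    (by
      have heq : (fun N : ℕ => -r N - -v N) = fun N => v N - r N := by
        funext N; ring
      rw [heq]; exact hgap)
  exact ⟨φ, hφ, by simpa using ht.neg⟩

end Steering

theorem stmt18 (s : ℝ) (hs : 0 < s) :
    limitPoints (fun N => Geta (N + 1) s) =
      Set.Icc (min 1 (1 / ((2 : ℝ) ^ s - 1))) (max 1 (1 / ((2 : ℝ) ^ s - 1))) ∧
    limitPoints (fun N => Λeta (N + 1)) = Set.Icc (-(2 * Real.log 2)) 0 := by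
  constructor
  · -- the Riesz-type sums G
    have hd := two_rpow_sub_one_pos hs
    rcases le_total s 1 with hs1 | hs1
    · have hc1 : (1:ℝ) ≤ 1/(2^s-1) := by
        rw [le_div_iff₀ hd]
        have h2 : (2:ℝ)^s ≤ 2 := by
          have := Real.rpow_le_rpow_of_exponent_le one_le_two hs1
          rwa [Real.rpow_one] at this
        linarith
      rw [min_eq_left hc1, max_eq_right hc1]
      ext L
      simp only [Set.mem_Icc]
      constructor
      · rintro ⟨φ, hφ, ht⟩
        exact ⟨ge_of_tendsto' ht fun m => Geta_ge_one hs hs1 (Nat.le_add_left 1 (φ m)),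
          le_of_tendsto' ht fun m => Geta_le_c hs hs1 (Nat.le_add_left 1 (φ m))⟩
      · rintro ⟨h1L, hLc⟩
        exact steering (fun N => Geta N s) (reachG s) L
          (fun N hN => Geta_two_mul hs hN)
          (fun N _ => reachG_two_mul_add_one hs N)
          (fun N _ => Geta_succ_le_reach hs hs1 N)
          (by show Geta 1 s ≤ L; rw [Geta_one]; exact h1L)
          (by rw [reachG_one hs]; exact hLc)
          (G_gap hs (1/(2^s-1)) (by positivity) (fun N hN => Geta_le_c hs hs1 hN))
    · have hc1 : 1/(2^s-1) ≤ (1:ℝ) := by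
        rw [div_le_one hd]
        have h2 : (2:ℝ) ≤ 2^s := by
          have := Real.rpow_le_rpow_of_exponent_le one_le_two hs1
          rwa [Real.rpow_one] at this
        linarith
      rw [min_eq_right hc1, max_eq_left hc1]
      ext L
      simp only [Set.mem_Icc]
      constructor
      · rintro ⟨φ, hφ, ht⟩
        exact ⟨ge_of_tendsto' ht fun m => Geta_ge_c hs hs1 (Nat.le_add_left 1 (φ m)),
          le_of_tendsto' ht fun m => Geta_le_one hs1 (Nat.le_add_left 1 (φ m))⟩
      · rintro ⟨hcL, hL1⟩
        refine steering' (fun N => Geta N s) (reachG s) L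
          (fun N hN => Geta_two_mul hs hN)
          (fun N _ => reachG_two_mul_add_one hs N)
          (fun N _ => reach_le_Geta_succ hs1 N)
          (by show L ≤ Geta 1 s; rw [Geta_one]; exact hL1)
          (by rw [reachG_one hs]; exact hcL)
          ?_
        have h := (G_gap hs 1 zero_le_one (fun N hN => Geta_le_one hs1 hN)).neg
        have heq : (fun N : ℕ => -(reachG s N - Geta N s)) = fun N => Geta N s - reachG s N := by
          funext N; ring
        rw [heq] at h
        simpa using h
  · -- the entropy-type sums Λ
    ext L
    simp only [Set.mem_Icc]
    constructor
    · rintro ⟨φ, hφ, ht⟩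
      exact ⟨ge_of_tendsto' ht fun m => Lam_ge _ (Nat.le_add_left 1 (φ m)),
        le_of_tendsto' ht fun m => Lam_nonpos _ (Nat.le_add_left 1 (φ m))⟩
    · rintro ⟨hL1, hL2⟩
      refine steering' Λeta fl L
        (fun N hN => Lam_two_mul hN)
        (fun N _ => fl_two_mul_add_one N)
        (fun N hN => ?_)
        (by rw [Lam_one]; exact hL2)
        (by rw [fl_one]; exact hL1)
        Lam_gap
      have h := fl_eq_Lam_succ hN
      have hlog2 : 0 ≤ Real.log 2 := Real.log_nonneg one_le_two
      have hpos : 0 ≤ 2*Real.log 2/(2*(N:ℝ)+1) := by positivity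
      linarith

end GreedyEnergy
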